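/- arXiv:2111.05518 — 4 statements merged into one kernel-verified Lean document; each statement's English description precedes it below -/
import Mathlib

section
/- Let q be a prime power, let k, m, d be positive integers with q > m(m-1)/2 and d ≥ m-1, and let x_1, …, x_m be m distinct points of F_q^k. If f is chosen uniformly at random from F_q[X_1,…,X_k]_{≤d}, then the probability that f(x_i) = 0 for all i = 1, …, m is exactly q^{-m}; equivalently, the number of polynomials in F_q[X_1,…,X_k]_{≤d} vanishing at all of x_1,…,x_m equals q^{-m} times the total number of polynomials in F_q[X_1,…,X_k]_{≤d}. -/
/-!
Evaluation at the points `x₁, …, xₘ` is a linear map from the polynomials of total degree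
at most `d` to `F^m`. It is surjective: for `j ≠ i` pick a coordinate in which `xᵢ` and `xⱼ`
differ; the product of the corresponding `m - 1` affine factors vanishing at the `xⱼ` is a
Lagrange polynomial for `xᵢ` of degree `m - 1 ≤ d`. The polynomials vanishing at all `xᵢ`
form its kernel, whose cardinality is therefore `q^{-m}` times that of the domain.
-/

open MvPolynomial

theorem LinearMap.card_eq_card_mul_card_ker_of_surjective {R M N : Type*} [Ring R]
    [AddCommGroup M] [AddCommGroup N] [Module R M] [Module R N] (f : M →ₗ[R] N)
    (hf : Function.Surjective f) :
    Nat.card M = Nat.card N * Nat.card (LinearMap.ker f) := by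
  rw [Submodule.card_eq_card_quotient_mul_card (LinearMap.ker f),
    Nat.card_congr (f.quotKerEquivOfSurjective hf).toEquiv, mul_comm]

namespace MvPolynomial

variable {σ ι K : Type*} [Field K]

theorem exists_totalDegree_le_one_eval_eq_one_eval_eq_zero (p q : σ → K) :
    ∃ ℓ : MvPolynomial σ K,
      ℓ.totalDegree ≤ 1 ∧ (p ≠ q → eval p ℓ = 1) ∧ eval q ℓ = 0 := by
  by_cases hpq : p = q
  · exact ⟨0, by simp, fun h => absurd hpq h, by simp⟩
  obtain ⟨a, ha⟩ := Function.ne_iff.mp hpq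
  refine ⟨(p a - q a)⁻¹ • (X a - C (q a)), ?_, fun _ => ?_, by simp⟩
  · exact (totalDegree_smul_le _ _).trans ((totalDegree_sub_C_le _ _).trans (totalDegree_X a).le)
  · simp [inv_mul_cancel₀ (sub_ne_zero.mpr ha)]

theorem exists_lagrange_basis [Fintype ι] [DecidableEq ι] {x : ι → σ → K}
    (hx : Function.Injective x) :
    ∃ L : ι → MvPolynomial σ K, (∀ i, (L i).totalDegree ≤ Fintype.card ι - 1) ∧
      ∀ i j, eval (x j) (L i) = if i = j then 1 else 0 := by
  choose ℓ hℓ_deg hℓ_one hℓ_zero using fun i j =>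
    exists_totalDegree_le_one_eval_eq_one_eval_eq_zero (x i) (x j)
  refine ⟨fun i => ∏ j ∈ Finset.univ.erase i, ℓ i j, fun i => ?_, fun i j => ?_⟩
  · calc (∏ j ∈ Finset.univ.erase i, ℓ i j).totalDegree
        ≤ ∑ j ∈ Finset.univ.erase i, (ℓ i j).totalDegree := totalDegree_finsetProd _ _
      _ ≤ ∑ j ∈ Finset.univ.erase i, 1 := Finset.sum_le_sum fun j _ => hℓ_deg i j
      _ = Fintype.card ι - 1 := by simp [Finset.card_erase_of_mem]
  · rw [map_prod]
    split_ifs with hij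
    · subst hij
      exact Finset.prod_eq_one fun j hj => hℓ_one i j (hx.ne (Finset.ne_of_mem_erase hj).symm)
    · exact Finset.prod_eq_zero (Finset.mem_erase.mpr ⟨Ne.symm hij, Finset.mem_univ j⟩)
        (hℓ_zero i j)

theorem surjective_pi_eval_domRestrict_restrictTotalDegree [Fintype ι] {x : ι → σ → K}
    (hx : Function.Injective x) {d : ℕ} (hd : Fintype.card ι - 1 ≤ d) :
    Function.Surjective ((LinearMap.pi fun i => (aeval (x i)).toLinearMap).domRestrict
      (restrictTotalDegree σ K d)) := by
  classical
  obtain ⟨L, hL_deg, hL_eval⟩ := exists_lagrange_basis hx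
  have hL_mem : ∀ i, L i ∈ restrictTotalDegree σ K d := fun i =>
    (mem_restrictTotalDegree _ _ _).mpr ((hL_deg i).trans hd)
  intro v
  refine ⟨∑ i, v i • ⟨L i, hL_mem i⟩, ?_⟩
  ext j
  simp [Finset.sum_apply, hL_eval]

end MvPolynomial

theorem statement_0_general (F : Type) [Field F] [Fintype F]
    (k m d : ℕ)
    (hd : m - 1 ≤ d)
    (x : Fin m → (Fin k → F)) (hx : Function.Injective x) :
    Fintype.card F ^ m *
        Nat.card {f : MvPolynomial (Fin k) F //
          f.totalDegree ≤ d ∧ ∀ i, MvPolynomial.eval (x i) f = 0} =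
      Nat.card {f : MvPolynomial (Fin k) F // f.totalDegree ≤ d} := by
  set φ := (LinearMap.pi fun i => (aeval (x i)).toLinearMap).domRestrict
    (restrictTotalDegree (Fin k) F d)
  have hφ : Function.Surjective φ :=
    surjective_pi_eval_domRestrict_restrictTotalDegree hx (by simpa using hd)
  have h_dom : Nat.card {f : MvPolynomial (Fin k) F // f.totalDegree ≤ d} =
      Nat.card (restrictTotalDegree (Fin k) F d) :=
    Nat.card_congr (Equiv.subtypeEquivRight fun f => (mem_restrictTotalDegree _ _ _).symm)
  have h_ker : Nat.card {f : MvPolynomial (Fin k) F //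
      f.totalDegree ≤ d ∧ ∀ i, eval (x i) f = 0} = Nat.card (LinearMap.ker φ) :=
    Nat.card_congr <| (Equiv.subtypeSubtypeEquivSubtypeInter _ _).symm.trans <|
      Equiv.subtypeEquiv (Equiv.subtypeEquivRight fun f => (mem_restrictTotalDegree _ _ _).symm)
        fun f => by simp [φ, funext_iff]
  rw [h_ker, h_dom, φ.card_eq_card_mul_card_ker_of_surjective hφ,
    Nat.card_fun, Nat.card_eq_fintype_card (α := F), Nat.card_eq_fintype_card (α := Fin m),
    Fintype.card_fin]

/-- Over a finite field `F` (of prime power order `q = Fintype.card F`),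
if `q > m(m-1)/2` and `d ≥ m - 1`, and `x₁, …, xₘ` are distinct points of `F^k`, then the
number of polynomials in `F[X₁,…,X_k]` of total degree at most `d` vanishing at all the `xᵢ`
equals `q^{-m}` times the total number of polynomials of total degree at most `d`. -/
theorem statement_0 (F : Type) [Field F] [Fintype F]
    (k m d : ℕ) (hk : 0 < k) (hm : 0 < m) (hd0 : 0 < d)
    (hq : m * (m - 1) / 2 < Fintype.card F) (hd : m - 1 ≤ d)
    (x : Fin m → (Fin k → F)) (hx : Function.Injective x) :
    Fintype.card F ^ m *
        Nat.card {f : MvPolynomial (Fin k) F //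
          f.totalDegree ≤ d ∧ ∀ i, MvPolynomial.eval (x i) f = 0} =
      Nat.card {f : MvPolynomial (Fin k) F // f.totalDegree ≤ d} :=
  statement_0_general F k m d hd x hx
end

section
/- Let q be a prime power, let k, m, d be positive integers with q > m(m-1)/2 and d ≥ m-1, let K be an algebraic closure of F_q, and let x_1, …, x_m be m distinct points of K^k. If f is chosen uniformly at random from F_q[X_1,…,X_k]_{≤d}, then the probability that f(x_i) = 0 for all i = 1, …, m (where f is evaluated at points of K^k via the embedding of F_q into K) is at most q^{-m}. -/
/-!
Choose `a ∈ F^k` such that the linear form `ℓ = ∑ aₜ Xₜ` separates the points `xᵢ`: each pair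
`i < j` excludes the kernel of a nonzero linear form on `F^k`, and since there are fewer than `q`
pairs these proper subspaces cannot cover `F^k` (the sum of the inverses of their indices is
`< 1`). The polynomials `1, ℓ, …, ℓ^(m-1)` have degree `≤ d`, and their values at `x₁, …, xₘ` are
the columns of the Vandermonde matrix of the distinct `ℓ(xᵢ)`, hence linearly independent. So the
evaluation map on polynomials of degree `≤ d` has rank `≥ m`, and its kernel has index `≥ q^m`.
-/

open MvPolynomial Finset
open scoped Pointwise

section FiniteField

variable {F E : Type*} [Field F] [Fintype F] [AddCommGroup E] [Module F E]

theorem Submodule.inv_index_le_inv_card (p : Submodule F E) (hp : p ≠ ⊤) :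
    (p.toAddSubgroup.index : ℚ)⁻¹ ≤ (Fintype.card F : ℚ)⁻¹ := by
  rcases Nat.eq_zero_or_pos p.toAddSubgroup.index with h | h
  · simp [h]
  obtain ⟨v, -, hv⟩ := SetLike.exists_of_lt hp.lt_top
  have : p.toAddSubgroup.FiniteIndex := ⟨h.ne'⟩
  have : Finite (E ⧸ p) := AddSubgroup.finite_quotient_of_finiteIndex
  have hinj : Function.Injective fun c : F => c • Submodule.Quotient.mk (p := p) v :=
    smul_left_injective F ((Submodule.Quotient.mk_eq_zero p).not.2 hv)
  have hcard : Fintype.card F ≤ p.toAddSubgroup.index := by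
    rw [← Nat.card_eq_fintype_card]
    exact Nat.card_le_card_of_injective _ hinj
  gcongr

theorem LinearMap.exists_forall_apply_ne_zero_of_card_lt {W ι : Type*} [AddCommGroup W]
    [Module F W] {s : Finset ι} (L : ι → E →ₗ[F] W) (hL : ∀ i ∈ s, L i ≠ 0)
    (hs : #s < Fintype.card F) : ∃ v, ∀ i ∈ s, L i v ≠ 0 := by
  by_contra! hcover
  have hcovers : ⋃ i ∈ s, (0 : E) +ᵥ ((LinearMap.ker (L i)).toAddSubgroup : Set E) = .univ := by
    simpa [Set.eq_univ_iff_forall] using hcover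
  have hq : (0 : ℚ) < Fintype.card F := by exact_mod_cast Fintype.card_pos
  have := calc
    (1 : ℚ) ≤ ∑ i ∈ s, ((LinearMap.ker (L i)).toAddSubgroup.index : ℚ)⁻¹ :=
      AddSubgroup.one_le_sum_inv_index_of_leftCoset_cover hcovers
    _ ≤ ∑ i ∈ s, (Fintype.card F : ℚ)⁻¹ := sum_le_sum fun i hi =>
      Submodule.inv_index_le_inv_card _ (by simpa [LinearMap.ker_eq_top] using hL i hi)
    _ = #s / Fintype.card F := by simp [div_eq_mul_inv]
  rw [le_div_iff₀ hq, one_mul] at this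
  exact this.not_gt (by exact_mod_cast hs)

theorem exists_injective_linearCombination {M σ ι : Type*} [AddCommGroup M] [Module F M]
    [Fintype σ] [Fintype ι] [LinearOrder ι] (x : ι → σ → M) (hx : Function.Injective x)
    (hq : (Fintype.card ι).choose 2 < Fintype.card F) :
    ∃ a : σ → F, Function.Injective fun i => Fintype.linearCombination F (x i) a := by
  classical
  obtain ⟨a, ha⟩ := LinearMap.exists_forall_apply_ne_zero_of_card_lt
    (s := {p : ι × ι | p.1 < p.2}) (fun p => Fintype.linearCombination F (x p.1 - x p.2))
    (fun p hp h => (mem_filter.1 hp).2.ne <| hx <| funext fun t => sub_eq_zero.1 <| by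
      simpa using LinearMap.congr_fun h (Pi.single t 1))
    (by rwa [Fintype.card_product_filter_lt])
  refine ⟨a, fun i j hij => ?_⟩
  have hlt (i j : ι) (h : i < j) : Fintype.linearCombination F (x i) a ≠
      Fintype.linearCombination F (x j) a := by
    simpa [Fintype.linearCombination_apply, smul_sub, sub_eq_zero] using ha (i, j) (by simpa)
  by_contra hne
  rcases lt_or_gt_of_ne hne with h | h
  · exact hlt i j h hij
  · exact hlt j i h hij.symm

theorem LinearMap.card_pow_mul_card_ker_le {V N ι : Type*} [AddCommGroup V] [Module F V]
    [Finite V] [AddCommGroup N] [Module F N] [Fintype ι] (φ : V →ₗ[F] N) (v : ι → V)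
    (hv : LinearIndependent F (φ ∘ v)) :
    Fintype.card F ^ Fintype.card ι * Nat.card (ker φ) ≤ Nat.card V := by
  have hrange : Fintype.card ι ≤ Module.finrank F (range φ) :=
    (hv.of_comp (range φ).subtype (v := φ.rangeRestrict ∘ v)).fintype_card_le_finrank
  have := Fintype.ofFinite V
  have := Fintype.ofFinite (ker φ)
  rw [Nat.card_eq_fintype_card, Nat.card_eq_fintype_card,
    Module.card_eq_pow_finrank (K := F) (V := ker φ), Module.card_eq_pow_finrank (K := F) (V := V),
    ← pow_add, ← φ.finrank_range_add_finrank_ker]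
  exact Nat.pow_le_pow_right Fintype.card_pos (by omega)

end FiniteField

theorem MvPolynomial.totalDegree_sum_C_mul_X_le {R σ : Type*} [CommSemiring R] [Fintype σ]
    (a : σ → R) : (∑ t, C (a t) * X t : MvPolynomial σ R).totalDegree ≤ 1 :=
  (IsHomogeneous.sum _ _ _ fun t _ => isHomogeneous_C_mul_X (a t) t).totalDegree_le

theorem MvPolynomial.aeval_sum_C_mul_X {R A σ : Type*} [CommSemiring R] [CommSemiring A]
    [Algebra R A] [Fintype σ] (a : σ → R) (x : σ → A) :
    aeval x (∑ t, C (a t) * X t) = Fintype.linearCombination R x a := by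
  simp [Fintype.linearCombination_apply, Algebra.smul_def]

theorem MvPolynomial.card_pow_mul_card_vanishing_le {F K σ ι J : Type*} [Field F] [Fintype F]
    [CommRing K] [Algebra F K] [Finite σ] [Fintype J] (d : ℕ) (x : ι → σ → K)
    (P : J → MvPolynomial σ F) (hP : ∀ j, (P j).totalDegree ≤ d)
    (hli : LinearIndependent F fun j i => aeval (x i) (P j)) :
    Fintype.card F ^ Fintype.card J *
        Nat.card {f : MvPolynomial σ F // f.totalDegree ≤ d ∧ ∀ i, aeval (x i) f = 0} ≤
      Nat.card {f : MvPolynomial σ F // f.totalDegree ≤ d} := by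
  let V := restrictTotalDegree σ F d
  let φ : V →ₗ[F] ι → K := (LinearMap.pi fun i => (aeval (x i)).toLinearMap) ∘ₗ V.subtype
  have : Finite V := Module.finite_of_finite F
  have hV : Nat.card {f : MvPolynomial σ F // f.totalDegree ≤ d} = Nat.card V :=
    Nat.card_congr (Equiv.subtypeEquivRight fun f => (mem_restrictTotalDegree _ _ _).symm)
  have hker : Nat.card {f : MvPolynomial σ F // f.totalDegree ≤ d ∧ ∀ i, aeval (x i) f = 0} =
      Nat.card (LinearMap.ker φ) :=
    Nat.card_congr <| (Equiv.subtypeEquivRight fun f => by rw [mem_restrictTotalDegree]).trans <|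
      (Equiv.subtypeSubtypeEquivSubtypeInter (· ∈ V) _).symm.trans <|
      Equiv.subtypeEquivRight fun g => by simp [φ, _root_.funext_iff]
  rw [hV, hker]
  exact φ.card_pow_mul_card_ker_le (fun j => ⟨P j, (mem_restrictTotalDegree _ _ _).2 (hP j)⟩) hli

theorem statement_1_general (F K : Type) [Field F] [Fintype F] [Field K] [Algebra F K]
    (k m d : ℕ)
    (hq : m * (m - 1) / 2 < Fintype.card F) (hd : m - 1 ≤ d)
    (x : Fin m → (Fin k → K)) (hx : Function.Injective x) :
    Fintype.card F ^ m *
        Nat.card {f : MvPolynomial (Fin k) F //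
          f.totalDegree ≤ d ∧ ∀ i, MvPolynomial.aeval (x i) f = 0} ≤
      Nat.card {f : MvPolynomial (Fin k) F // f.totalDegree ≤ d} := by
  obtain ⟨a, ha⟩ := exists_injective_linearCombination (F := F) x hx
    (by rwa [Fintype.card_fin, Nat.choose_two_right])
  set ℓ : MvPolynomial (Fin k) F := ∑ t, C (a t) * X t
  have hdeg (j : Fin m) : (ℓ ^ (j : ℕ)).totalDegree ≤ d :=
    calc (ℓ ^ (j : ℕ)).totalDegree ≤ j * 1 :=
          (totalDegree_pow _ _).trans (Nat.mul_le_mul_left _ (totalDegree_sum_C_mul_X_le a))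
      _ ≤ d := by omega
  have hvandermonde : (fun (j : Fin m) i => aeval (x i) (ℓ ^ (j : ℕ))) =
      (Matrix.vandermonde fun i => Fintype.linearCombination F (x i) a).col := by
    ext j i
    rw [map_pow, aeval_sum_C_mul_X]
    rfl
  have hli := (Matrix.linearIndependent_cols_of_det_ne_zero
    (Matrix.det_vandermonde_ne_zero_iff.2 ha)).restrict_scalars' F
  simpa using card_pow_mul_card_vanishing_le d x _ hdeg (hvandermonde ▸ hli)

/-- Over a finite field `F` (of prime power order `q = Fintype.card F`)
with algebraic closure `K`, if `q > m(m-1)/2` and `d ≥ m - 1`, and `x₁, …, xₘ` are distinct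
points of `K^k`, then the number of polynomials in `F[X₁,…,X_k]` of total degree at most `d`
vanishing at all the `xᵢ` (evaluated in `K` via the embedding `F ↪ K`) is at most `q^{-m}`
times the total number of polynomials of total degree at most `d`. -/
theorem statement_1 (F K : Type) [Field F] [Fintype F] [Field K] [Algebra F K]
    [IsAlgClosure F K]
    (k m d : ℕ) (hk : 0 < k) (hm : 0 < m) (hd0 : 0 < d)
    (hq : m * (m - 1) / 2 < Fintype.card F) (hd : m - 1 ≤ d)
    (x : Fin m → (Fin k → K)) (hx : Function.Injective x) :
    Fintype.card F ^ m *
        Nat.card {f : MvPolynomial (Fin k) F //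
          f.totalDegree ≤ d ∧ ∀ i, MvPolynomial.aeval (x i) f = 0} ≤
      Nat.card {f : MvPolynomial (Fin k) F // f.totalDegree ≤ d} :=
  statement_1_general F K k m d hq hd x hx
end

section
/- Fix a positive integer k and set d = (k+1)^2 + 1. There exists a constant C > 0, depending only on k, such that for every prime power q with q > d(d−1)/2 the following holds: if f_1, …, f_k are chosen independently and uniformly at random from F_q[X_1,…,X_{k+1}]_{≤d}, and Z denotes the number of points x ∈ F_q^{k+1} with f_1(x) = ⋯ = f_k(x) = 0, then the probability that Z < q/2 is at most C·q^{1−d}. -/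
/-!
Let `t = 2d - 2` and let `W f x` be the indicator that `x` is a common zero of `f`, minus its
mean `q^{-k}`, so that `Z - q = ∑ₓ W f x` and `∑_f (Z - q)^t` is a sum over `t`-tuples of points
of `∑_f ∏ⱼ W f (xⱼ)`. Evaluation of polynomials of degree `≤ d` at points that are successively
separated by such polynomials is surjective, so their values there are jointly uniform; hence a
tuple contributes nothing as soon as one of its points occurs once and is separated from the
others. Among at most `2d - 2` points, a point fails to be separated only if some line through
it carries `d + 2` of them, and such a line is unique. The surviving tuples either repeat every
point or have all their simple points on this heavy line; counting them bounds the moment by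
`C q^{d-1}` times the number of `f`, and Markov's inequality at `|Z - q| ≥ q/2` gives
`C' q^{1-d}`.
-/

open MvPolynomial Finset
open scoped Classical

namespace RandomPolynomialSystem

variable {F : Type*} [Field F]

section Lines

variable {V : Type*} [AddCommGroup V] [Module F V]

theorem card_filter_mem_line_inter_le_one [DecidableEq V] (S : Finset V) {P Q P' Q' : V}
    (h : line[F, P, Q] ≠ line[F, P', Q']) :
    #({z ∈ S | z ∈ line[F, P, Q]} ∩ {z ∈ S | z ∈ line[F, P', Q']}) ≤ 1 := by
  refine card_le_one.2 fun z₁ hz₁ z₂ hz₂ => ?_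
  simp only [mem_inter, mem_filter] at hz₁ hz₂
  by_contra hne
  exact h ((affineSpan_pair_eq_of_mem_of_mem_of_ne hz₁.1.2 hz₂.1.2 hne).symm.trans
    (affineSpan_pair_eq_of_mem_of_mem_of_ne hz₁.2.2 hz₂.2.2 hne))

theorem disjoint_filter_mem_line {A : Finset V} {z a b : V} (hz : z ∉ A)
    (hb : b ∉ line[F, z, a]) :
    Disjoint {y ∈ A | y ∈ line[F, z, a]} {y ∈ A | y ∈ line[F, z, b]} := by
  refine disjoint_left.2 fun w hwa hwb => hb ?_
  simp only [mem_filter] at hwa hwb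
  have hzw : z ≠ w := fun h => hz (h ▸ hwa.1)
  rw [← affineSpan_pair_eq_of_mem_of_mem_of_ne (left_mem_affineSpan_pair F z a) hwa.2 hzw,
    affineSpan_pair_eq_of_mem_of_mem_of_ne (left_mem_affineSpan_pair F z b) hwb.2 hzw]
  exact right_mem_affineSpan_pair F z b

theorem card_filter_mem_line_lt {A B : Finset V} {z a y : V} (hz : z ∉ A) (ha : a ∈ A)
    (hy : y ∈ A) (hya : y ∈ line[F, z, a]) (hBA : B ⊆ A) (haB : a ∉ B) :
    #{w ∈ B | w ∈ line[F, z, y]} < #{w ∈ A | w ∈ line[F, z, a]} := by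
  have hzy : z ≠ y := fun h => hz (h ▸ hy)
  rw [affineSpan_pair_eq_of_mem_of_mem_of_ne (left_mem_affineSpan_pair F z a) hya hzy]
  refine card_lt_card ((ssubset_iff_of_subset (filter_subset_filter _ hBA)).2
    ⟨a, ?_, ?_⟩)
  · exact mem_filter.2 ⟨ha, right_mem_affineSpan_pair F z a⟩
  · exact fun h => haB (mem_filter.1 h).1

theorem card_filter_mem_line_add_add_le [DecidableEq V] {A : Finset V} {z a b y : V} (hz : z ∉ A)
    (hb : b ∉ line[F, z, a]) (hya : y ∉ line[F, z, a]) (hyb : y ∉ line[F, z, b]) :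
    #{w ∈ A | w ∈ line[F, z, a]} + #{w ∈ A | w ∈ line[F, z, b]} +
      #{w ∈ A | w ∈ line[F, z, y]} ≤ #A := by
  rw [← card_union_of_disjoint (disjoint_filter_mem_line hz hb),
    ← card_union_of_disjoint (disjoint_union_left.2
      ⟨disjoint_filter_mem_line hz hya, disjoint_filter_mem_line hz hyb⟩)]
  exact card_le_card (union_subset (union_subset (filter_subset _ _)
    (filter_subset _ _)) (filter_subset _ _))

/-- A third line through `z` keeping `c + 1` points would, with the lines through `a` and `b`,
need `3 (c + 1) > #A` points. -/
theorem card_filter_mem_line_erase_erase_le [DecidableEq V] {c : ℕ} {A : Finset V} {z a b : V}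
    (hz : z ∉ A) (hA : #A ≤ 2 * (c + 1)) (ha : a ∈ A) (hb : b ∈ A) (hba : b ∉ line[F, z, a])
    (hamax : ∀ y ∈ A, #{w ∈ A | w ∈ line[F, z, y]} ≤ #{w ∈ A | w ∈ line[F, z, a]})
    (hbmax : ∀ y ∈ A, y ∉ line[F, z, a] →
      #{w ∈ A | w ∈ line[F, z, y]} ≤ #{w ∈ A | w ∈ line[F, z, b]})
    (hlines : ∀ y ∈ A, #{w ∈ A | w ∈ line[F, z, y]} ≤ c + 1) :
    ∀ y ∈ (A.erase a).erase b, #{w ∈ (A.erase a).erase b | w ∈ line[F, z, y]} ≤ c := by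
  intro y hy
  have hyA : y ∈ A := mem_of_mem_erase (mem_of_mem_erase hy)
  have hsub : (A.erase a).erase b ⊆ A :=
    (erase_subset _ _).trans (erase_subset _ _)
  by_cases hya : y ∈ line[F, z, a]
  · have := card_filter_mem_line_lt hz ha hyA hya hsub
      (fun h => (mem_erase.1 (mem_of_mem_erase h)).1 rfl)
    have := hlines a ha
    omega
  by_cases hyb : y ∈ line[F, z, b]
  · have := card_filter_mem_line_lt hz hb hyA hyb hsub (fun h => (mem_erase.1 h).1 rfl)
    have := hlines b hb
    omega
  have h3 := card_filter_mem_line_add_add_le (A := A) hz hba hya hyb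
  have := card_le_card (filter_subset_filter (· ∈ line[F, z, y]) hsub)
  have := hbmax y hyA hya
  have := hamax b hb
  omega

variable (F) in
noncomputable def heavyLine (d : ℕ) (S : Finset V) : AffineSubspace F V :=
  if h : ∃ P Q : V, d + 2 ≤ #{z ∈ S | z ∈ line[F, P, Q]} then
    line[F, h.choose, h.choose_spec.choose]
  else ⊥

/-- Two distinct lines share at most one point. -/
theorem heavyLine_eq [DecidableEq V] {d : ℕ} {S : Finset V} {P Q : V} (hS : #S ≤ 2 * d + 2)
    (h : d + 2 ≤ #{z ∈ S | z ∈ line[F, P, Q]}) : heavyLine F d S = line[F, P, Q] := by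
  have huniq : ∀ P' Q' : V, d + 2 ≤ #{z ∈ S | z ∈ line[F, P', Q']} →
      line[F, P', Q'] = line[F, P, Q] := by
    intro P' Q' h'
    by_contra hne
    have hinter := card_filter_mem_line_inter_le_one S hne
    have hunion := card_union_add_card_inter {z ∈ S | z ∈ line[F, P', Q']}
      {z ∈ S | z ∈ line[F, P, Q]}
    have := card_le_card (union_subset (filter_subset
      (· ∈ line[F, P', Q']) S) (filter_subset (· ∈ line[F, P, Q]) S))
    omega
  have hex : ∃ P Q : V, d + 2 ≤ #{z ∈ S | z ∈ line[F, P, Q]} := ⟨P, Q, h⟩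
  rw [heavyLine, dif_pos hex]
  exact huniq _ _ hex.choose_spec.choose_spec

end Lines

section Separation

variable {σ : Type*}

def Separated (c : ℕ) (A : Finset (σ → F)) (z : σ → F) : Prop :=
  ∃ g : MvPolynomial σ F, g.totalDegree ≤ c ∧ (∀ y ∈ A, eval y g = 0) ∧ eval z g ≠ 0

variable {c c' : ℕ} {A B : Finset (σ → F)} {z : σ → F}

theorem Separated.mono (h : Separated c A z) (hc : c ≤ c') (hBA : B ⊆ A) : Separated c' B z :=
  let ⟨g, hg, hA, hz⟩ := h
  ⟨g, hg.trans hc, fun y hy => hA y (hBA hy), hz⟩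

theorem Separated.union [DecidableEq (σ → F)] (h : Separated c A z) (h' : Separated c' B z) :
    Separated (c + c') (A ∪ B) z := by
  obtain ⟨g, hg, hA, hz⟩ := h
  obtain ⟨g', hg', hB, hz'⟩ := h'
  refine ⟨g * g', (totalDegree_mul g g').trans (add_le_add hg hg'), fun y hy => ?_, ?_⟩
  · rcases mem_union.1 hy with hy | hy <;> simp [hA, hB, hy]
  · simpa using mul_ne_zero hz hz'

theorem separated_empty : Separated 0 (∅ : Finset (σ → F)) z :=
  ⟨1, by simp, by simp, by simp⟩

theorem separated_singleton {y : σ → F} (h : y ≠ z) : Separated 1 {y} z := by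
  obtain ⟨i, hi⟩ := Function.ne_iff.1 h
  refine ⟨X i - C (y i), ?_, by simp, by simpa [sub_eq_zero] using Ne.symm hi⟩
  exact (totalDegree_sub _ _).trans (by simp)

theorem separated_of_card_le [DecidableEq (σ → F)] (hz : z ∉ A) (hA : #A ≤ c) :
    Separated c A z := by
  induction A using Finset.induction_on generalizing c with
  | empty => exact separated_empty.mono (Nat.zero_le c) subset_rfl
  | @insert a A ha ih =>
    rw [card_insert_of_notMem ha] at hA
    have hsep := (separated_singleton fun (h : a = z) => hz (h ▸ mem_insert_self a A)).union
      (ih (fun h => hz (mem_insert_of_mem h)) le_rfl)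
    exact hsep.mono (by omega) (by rw [insert_eq])

theorem separated_of_forall_mem_affineSubspace [Fintype σ] {s : AffineSubspace F (σ → F)}
    {p : σ → F} (hp : p ∈ s) (hA : ∀ y ∈ A, y ∈ s) (hz : z ∉ s) : Separated 1 A z := by
  obtain ⟨ℓ, hℓz, hℓs⟩ := Submodule.exists_le_ker_of_notMem
    (mt (AffineSubspace.vsub_right_mem_direction_iff_mem hp z).1 hz)
  have heval : ∀ y : σ → F,
      eval y (∑ i, C (ℓ (Pi.single i 1)) * (X i - C (p i))) = ℓ (y - p) := by
    intro y
    rw [LinearMap.pi_apply_eq_sum_univ ℓ (y - p)]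
    simp only [map_sum, map_mul, eval_C, map_sub, eval_X, smul_eq_mul, Pi.sub_apply, mul_comm]
    congr! with i
    simp [Pi.single_apply, eq_comm]
  refine ⟨_, ?_, fun y hy => ?_, by rwa [heval]⟩
  · refine (totalDegree_finsetSum _ _).trans (Finset.sup_le fun i _ => ?_)
    refine (totalDegree_mul _ _).trans ?_
    simpa using (totalDegree_sub (X i) (C (p i))).trans (by simp)
  · rw [heval]
    exact hℓs ((AffineSubspace.vsub_right_mem_direction_iff_mem hp y).2 (hA y hy))

/-- Take `a`, `b` on the two most populated lines through `z`: the line `ab` misses `z`, and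
removing `a`, `b` keeps the hypotheses for `c - 1`. -/
theorem separated_of_forall_card_filter_mem_line_le [Fintype σ] :
    ∀ {c : ℕ} {A : Finset (σ → F)} {z : σ → F}, z ∉ A → #A ≤ 2 * c →
      (∀ a ∈ A, #{y ∈ A | y ∈ line[F, z, a]} ≤ c) → Separated c A z := by
  intro c
  induction c with
  | zero =>
    intro A z _ hA _
    rw [card_eq_zero.1 (Nat.le_zero.1 hA)]
    exact separated_empty
  | succ c ih =>
    intro A z hz hA hlines
    by_cases hsmall : #A ≤ c + 1
    · exact separated_of_card_le hz hsmall
    obtain ⟨a, ha, hamax⟩ := A.exists_max_image (fun y => #{w ∈ A | w ∈ line[F, z, y]})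
      (card_pos.1 (by omega))
    have hoff : {y ∈ A | y ∉ line[F, z, a]}.Nonempty := by
      by_contra! h
      rw [filter_eq_empty_iff] at h
      have := hlines a ha
      rw [filter_true_of_mem fun y hy => not_not.1 (h hy)] at this
      omega
    obtain ⟨b, hb, hbmax⟩ := exists_max_image _
      (fun y => #{w ∈ A | w ∈ line[F, z, y]}) hoff
    obtain ⟨hbA, hba⟩ := mem_filter.1 hb
    have hzab : z ∉ line[F, a, b] := fun h => hba (by
      rw [affineSpan_pair_eq_of_mem_of_mem_of_ne h (left_mem_affineSpan_pair F a b)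
        (fun hza => hz (hza ▸ ha))]
      exact right_mem_affineSpan_pair F a b)
    have hsep_ab : Separated 1 {a, b} z := by
      refine separated_of_forall_mem_affineSubspace (left_mem_affineSpan_pair F a b) ?_ hzab
      simp [left_mem_affineSpan_pair, right_mem_affineSpan_pair]
    have hb_erase : b ∈ A.erase a :=
      mem_erase.2 ⟨fun h => hba (h ▸ right_mem_affineSpan_pair F z a), hbA⟩
    have hsep_rest : Separated c ((A.erase a).erase b) z := by
      have hlines' := card_filter_mem_line_erase_erase_le hz hA ha hbA hba hamax
        (fun y hy hya => hbmax y (mem_filter.2 ⟨hy, hya⟩)) hlines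
      refine ih (fun h => hz (mem_of_mem_erase (mem_of_mem_erase h))) ?_ hlines'
      rw [card_erase_of_mem hb_erase, card_erase_of_mem ha]
      omega
    refine (hsep_ab.union hsep_rest).mono (by omega) fun y hy => ?_
    by_cases hya : y = a
    · simp [hya]
    by_cases hyb : y = b
    · simp [hyb]
    exact mem_union_right _ (mem_erase.2 ⟨hyb, mem_erase.2 ⟨hya, hy⟩⟩)

end Separation

section Interpolation

variable {σ : Type*} {d : ℕ}

variable (d) in
noncomputable def evalOn (T : Finset (σ → F)) : restrictTotalDegree σ F d →ₗ[F] (T → F) :=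
  LinearMap.pi fun z => (aeval (z : σ → F)).toLinearMap ∘ₗ (restrictTotalDegree σ F d).subtype

@[simp]
theorem evalOn_apply (T : Finset (σ → F)) (g : restrictTotalDegree σ F d) (z : T) :
    evalOn d T g z = eval (z : σ → F) g := by
  simp [evalOn]

theorem Separated.exists_eval_eq_one {A : Finset (σ → F)} {z : σ → F} (h : Separated d A z) :
    ∃ g : restrictTotalDegree σ F d, eval z (g : MvPolynomial σ F) = 1 ∧
      ∀ y ∈ A, eval y (g : MvPolynomial σ F) = 0 := by
  obtain ⟨g, hg, hA, hz⟩ := h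
  refine ⟨⟨(eval z g)⁻¹ • g, (mem_restrictTotalDegree _ _ _).2
    ((totalDegree_smul_le _ _).trans hg)⟩, ?_, fun y hy => ?_⟩
  · simpa [smul_eq_C_mul] using inv_mul_cancel₀ hz
  · simp [smul_eq_C_mul, hA y hy]

theorem evalOn_insert_surjective [DecidableEq (σ → F)] {T : Finset (σ → F)} {z : σ → F}
    (hsep : Separated d T z) (hT : Function.Surjective (evalOn d T)) :
    Function.Surjective (evalOn d (insert z T)) := by
  obtain ⟨h, hz, hvan⟩ := hsep.exists_eval_eq_one
  intro v
  obtain ⟨g, hg⟩ := hT fun y => v ⟨y, mem_insert_of_mem y.2⟩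
  refine ⟨g + (v ⟨z, mem_insert_self z T⟩ - eval z (g : MvPolynomial σ F)) • h, ?_⟩
  ext ⟨y, hy⟩
  by_cases hyz : y = z
  · subst hyz
    simp [hz]
  · have hyT := (mem_insert.1 hy).resolve_left hyz
    simpa [hvan y hyT] using congrFun hg ⟨y, hyT⟩

theorem evalOn_surjective_of_subset {S T : Finset (σ → F)} (hST : S ⊆ T)
    (hT : Function.Surjective (evalOn d T)) : Function.Surjective (evalOn d S) := by
  intro v
  obtain ⟨g, hg⟩ := hT fun y => if hy : (y : σ → F) ∈ S then v ⟨y, hy⟩ else 0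
  refine ⟨g, funext fun y => ?_⟩
  simpa [y.2] using congrFun hg ⟨y, hST y.2⟩

theorem evalOn_surjective_of_card_le [DecidableEq (σ → F)] {T : Finset (σ → F)}
    (hT : #T ≤ d + 1) : Function.Surjective (evalOn d T) := by
  induction T using Finset.induction_on with
  | empty => exact fun v => ⟨0, funext fun y => absurd y.2 (notMem_empty _)⟩
  | @insert z T hz ih =>
    rw [card_insert_of_notMem hz] at hT
    exact evalOn_insert_surjective (separated_of_card_le hz (by omega)) (ih (by omega))

theorem evalOn_union_surjective [Fintype σ] [DecidableEq (σ → F)] {O S : Finset (σ → F)}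
    {s : AffineSubspace F (σ → F)} {p : σ → F} (hp : p ∈ s) (hO : #O ≤ d)
    (hOs : ∀ y ∈ O, y ∉ s) (hS : #S ≤ d + 1) (hSs : ∀ y ∈ S, y ∈ s) :
    Function.Surjective (evalOn d (O ∪ S)) := by
  induction O using Finset.induction_on with
  | empty =>
    rw [empty_union]
    exact evalOn_surjective_of_card_le hS
  | @insert z O hz ih =>
    rw [card_insert_of_notMem hz] at hO
    have hsep : Separated d (O ∪ S) z :=
      ((separated_of_card_le hz le_rfl).union (separated_of_forall_mem_affineSubspace
        hp hSs (hOs z (mem_insert_self z O)))).mono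
        (by omega) subset_rfl
    rw [insert_union]
    exact evalOn_insert_surjective hsep
      (ih (by omega) fun y hy => hOs y (mem_insert_of_mem hy))

theorem card_ker_evalOn [Fintype σ] [Fintype F] {T : Finset (σ → F)}
    (hT : Function.Surjective (evalOn d T)) :
    (Nat.card (LinearMap.ker (evalOn d T)) : ℝ) =
      Nat.card (restrictTotalDegree σ F d) * ((Fintype.card F : ℝ)⁻¹) ^ #T := by
  have hcard := Submodule.card_eq_card_quotient_mul_card (LinearMap.ker (evalOn d T))
  rw [Nat.card_congr ((evalOn d T).quotKerEquivOfSurjective hT).toEquiv, Nat.card_fun,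
    Nat.card_eq_fintype_card (α := F), Nat.card_eq_fintype_card (α := T), Fintype.card_coe] at hcard
  have hq : (Fintype.card F : ℝ) ≠ 0 := by exact_mod_cast Fintype.card_ne_zero
  rw [hcard, Nat.cast_mul, Nat.cast_pow, inv_pow, mul_assoc, mul_inv_cancel₀ (pow_ne_zero _ hq),
    mul_one]

end Interpolation

section Moments

variable {σ : Type*} {d k : ℕ}

noncomputable def zeroIndicator (f : Fin k → restrictTotalDegree σ F d) (x : σ → F) : ℝ :=
  if ∀ i, eval x (f i : MvPolynomial σ F) = 0 then 1 else 0

theorem zeroIndicator_nonneg (f : Fin k → restrictTotalDegree σ F d) (x : σ → F) :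
    0 ≤ zeroIndicator f x := by
  unfold zeroIndicator; split_ifs <;> norm_num

theorem zeroIndicator_le_one (f : Fin k → restrictTotalDegree σ F d) (x : σ → F) :
    zeroIndicator f x ≤ 1 := by
  unfold zeroIndicator; split_ifs <;> norm_num

variable [Fintype F]

/-- `q⁻¹ ^ k` is the probability that `x` is a common zero of `k` independent uniform `f i`. -/
noncomputable def centredZeroIndicator (f : Fin k → restrictTotalDegree σ F d) (x : σ → F) : ℝ :=
  zeroIndicator f x - (Fintype.card F : ℝ)⁻¹ ^ k

theorem abs_centredZeroIndicator_le_one (f : Fin k → restrictTotalDegree σ F d) (x : σ → F) :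
    |centredZeroIndicator f x| ≤ 1 := by
  have h₀ := zeroIndicator_nonneg f x
  have h₁ := zeroIndicator_le_one f x
  have hp₀ : 0 ≤ (Fintype.card F : ℝ)⁻¹ ^ k := by positivity
  have hp₁ : (Fintype.card F : ℝ)⁻¹ ^ k ≤ 1 :=
    pow_le_one₀ (by positivity) (inv_le_one_of_one_le₀ (by exact_mod_cast Fintype.card_pos))
  rw [centredZeroIndicator, abs_le]
  constructor <;> linarith

theorem abs_centredZeroIndicator_le (f : Fin k → restrictTotalDegree σ F d) (x : σ → F) :
    |centredZeroIndicator f x| ≤ zeroIndicator f x + (Fintype.card F : ℝ)⁻¹ ^ k := by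
  have h₀ := zeroIndicator_nonneg f x
  have hp₀ : 0 ≤ (Fintype.card F : ℝ)⁻¹ ^ k := by positivity
  rw [centredZeroIndicator, abs_le]
  constructor <;> linarith

theorem centredZeroIndicator_add_smul_of_eval_eq_zero {h : restrictTotalDegree σ F d}
    {y : σ → F} (hy : eval y (h : MvPolynomial σ F) = 0) (f : Fin k → restrictTotalDegree σ F d)
    (a : Fin k → F) :
    centredZeroIndicator (f + fun i => a i • h) y = centredZeroIndicator f y := by
  simp [centredZeroIndicator, zeroIndicator, smul_eq_C_mul, hy]

theorem sum_centredZeroIndicator_add_smul {h : restrictTotalDegree σ F d} {z : σ → F}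
    (hz : eval z (h : MvPolynomial σ F) = 1) (f : Fin k → restrictTotalDegree σ F d) :
    ∑ a : Fin k → F, centredZeroIndicator (f + fun i => a i • h) z = 0 := by
  have hind : ∀ a : Fin k → F, zeroIndicator (f + fun i => a i • h) z =
      if a = fun i => -eval z (f i : MvPolynomial σ F) then 1 else 0 := by
    intro a
    simp only [zeroIndicator, funext_iff]
    congr 1
    simp only [Pi.add_apply, Submodule.coe_add, Submodule.coe_smul, smul_eq_C_mul, map_add,
      map_mul, eval_C, hz, mul_one]
    exact propext (forall_congr' fun i => by rw [add_comm, add_eq_zero_iff_eq_neg])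
  have hq : (Fintype.card F : ℝ) ≠ 0 := by exact_mod_cast Fintype.card_ne_zero
  simp only [centredZeroIndicator, sum_sub_distrib, hind, sum_ite_eq',
    mem_univ, if_true, sum_const, card_univ, Fintype.card_fun,
    Fintype.card_fin, nsmul_eq_mul, Nat.cast_pow]
  rw [← mul_pow, mul_inv_cancel₀ hq, one_pow, sub_self]

variable [Fintype σ]

noncomputable instance : Fintype (restrictTotalDegree σ F d) :=
  have : Finite (restrictTotalDegree σ F d) := Module.finite_of_finite F
  Fintype.ofFinite _

variable (d k) in
noncomputable def momentTerm {t : ℕ} (x : Fin t → σ → F) : ℝ :=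
  ∑ f : Fin k → restrictTotalDegree σ F d, ∏ j, centredZeroIndicator f (x j)

theorem sum_prod_zeroIndicator {T : Finset (σ → F)} (hT : Function.Surjective (evalOn d T)) :
    ∑ f : Fin k → restrictTotalDegree σ F d, ∏ z ∈ T, zeroIndicator f z =
      Fintype.card (Fin k → restrictTotalDegree σ F d) * ((Fintype.card F : ℝ)⁻¹ ^ k) ^ #T := by
  have hprod : ∀ f : Fin k → restrictTotalDegree σ F d, ∏ z ∈ T, zeroIndicator f z =
      if ∀ i, f i ∈ LinearMap.ker (evalOn d T) then 1 else 0 := by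
    intro f
    simp only [zeroIndicator]
    rw [prod_boole]
    congr 1
    simp only [LinearMap.mem_ker, funext_iff, evalOn_apply, Pi.zero_apply, Subtype.forall]
    exact propext ⟨fun h i z hz => h z hz i, fun h z hz i => h i z hz⟩
  simp only [hprod, sum_boole, ← Fintype.card_subtype]
  rw [Fintype.card_congr Equiv.subtypePiEquivPi, Fintype.card_pi, prod_const,
    card_univ, Fintype.card_fin, ← Nat.card_eq_fintype_card, Nat.cast_pow,
    card_ker_evalOn hT, Fintype.card_pi, prod_const, card_univ, Fintype.card_fin,
    Nat.card_eq_fintype_card, Nat.cast_pow]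
  ring

theorem prod_abs_centredZeroIndicator_le {t : ℕ} (x : Fin t → σ → F) {T : Finset (σ → F)}
    (hTx : T ⊆ univ.image x) (f : Fin k → restrictTotalDegree σ F d) :
    ∏ j, |centredZeroIndicator f (x j)| ≤
      ∏ z ∈ T, (zeroIndicator f z + (Fintype.card F : ℝ)⁻¹ ^ k) := by
  have hnonneg : ∀ z, 0 ≤ |centredZeroIndicator f z| := fun z => abs_nonneg _
  calc ∏ j, |centredZeroIndicator f (x j)|
      = ∏ z ∈ univ.image x, |centredZeroIndicator f z| ^ #{j | x j = z} :=
        prod_comp (fun z => |centredZeroIndicator f z|) x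
    _ ≤ ∏ z ∈ univ.image x, |centredZeroIndicator f z| := by
        refine prod_le_prod (fun z _ => by positivity) fun z hz => ?_
        refine pow_le_of_le_one (hnonneg z) (abs_centredZeroIndicator_le_one f z) ?_
        obtain ⟨j, -, rfl⟩ := mem_image.1 hz
        exact card_ne_zero.2 ⟨j, by simp⟩
    _ = (∏ z ∈ univ.image x \ T, |centredZeroIndicator f z|) *
          ∏ z ∈ T, |centredZeroIndicator f z| := (prod_sdiff hTx).symm
    _ ≤ 1 * ∏ z ∈ T, |centredZeroIndicator f z| := by
        refine mul_le_mul_of_nonneg_right ?_ (prod_nonneg fun z _ => hnonneg z)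
        exact prod_le_one (fun z _ => hnonneg z)
          fun z _ => abs_centredZeroIndicator_le_one f z
    _ ≤ ∏ z ∈ T, (zeroIndicator f z + (Fintype.card F : ℝ)⁻¹ ^ k) := by
        rw [one_mul]
        exact prod_le_prod (fun z _ => hnonneg z)
          fun z _ => abs_centredZeroIndicator_le f z

theorem abs_momentTerm_le {t : ℕ} (x : Fin t → σ → F) {T : Finset (σ → F)}
    (hTx : T ⊆ univ.image x) (hT : Function.Surjective (evalOn d T)) :
    |momentTerm d k x| ≤
      Fintype.card (Fin k → restrictTotalDegree σ F d) * (2 * (Fintype.card F : ℝ)⁻¹ ^ k) ^ #T := by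
  set p : ℝ := (Fintype.card F : ℝ)⁻¹ ^ k
  calc |momentTerm d k x|
      ≤ ∑ f : Fin k → restrictTotalDegree σ F d, ∏ j, |centredZeroIndicator f (x j)| := by
        simpa only [momentTerm, abs_prod] using
          abs_sum_le_sum_abs (fun f => ∏ j, centredZeroIndicator f (x j)) univ
    _ ≤ ∑ f : Fin k → restrictTotalDegree σ F d, ∏ z ∈ T, (zeroIndicator f z + p) :=
        sum_le_sum fun f _ => prod_abs_centredZeroIndicator_le x hTx f
    _ = ∑ T' ∈ T.powerset, (∑ f : Fin k → restrictTotalDegree σ F d,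
          ∏ z ∈ T', zeroIndicator f z) * p ^ (#T - #T') := by
        simp only [prod_add, prod_const, sum_mul]
        rw [sum_comm]
        refine sum_congr rfl fun T' hT' => sum_congr rfl fun f _ => ?_
        rw [card_sdiff_of_subset (mem_powerset.1 hT')]
    _ = ∑ T' ∈ T.powerset,
          (Fintype.card (Fin k → restrictTotalDegree σ F d) : ℝ) * p ^ #T := by
        refine sum_congr rfl fun T' hT' => ?_
        have hT'T := mem_powerset.1 hT'
        rw [sum_prod_zeroIndicator (evalOn_surjective_of_subset hT'T hT), mul_assoc, ← pow_add,
          Nat.add_sub_cancel' (card_le_card hT'T)]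
    _ = _ := by
        rw [sum_const, card_powerset, nsmul_eq_mul, mul_pow]
        push_cast
        ring

/-- Translating the `f i` by multiples of a polynomial `h` that is `1` at `x j₀` and `0` at the
other points `x j` only affects the factor at `j₀`, whose average over the translations is `0`. -/
theorem momentTerm_eq_zero {t : ℕ} {x : Fin t → σ → F} {j₀ : Fin t}
    (hj₀ : ∀ j, x j = x j₀ → j = j₀)
    (hsep : Separated d ((univ.image x).erase (x j₀)) (x j₀)) :
    momentTerm d k x = 0 := by
  obtain ⟨h, hz, hvan⟩ := hsep.exists_eval_eq_one
  have hoff : ∀ j ∈ univ.erase j₀, eval (x j) (h : MvPolynomial σ F) = 0 :=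
    fun j hj => hvan _ (mem_erase.2 ⟨fun e => (mem_erase.1 hj).1 (hj₀ j e),
      mem_image_of_mem x (mem_univ j)⟩)
  have hshift : ∀ a : Fin k → F, momentTerm d k x =
      ∑ f : Fin k → restrictTotalDegree σ F d,
        ∏ j, centredZeroIndicator (f + fun i => a i • h) (x j) :=
    fun a => (Fintype.sum_equiv (Equiv.addRight fun i => a i • h) _ _ fun f => rfl).symm
  have hmul : (Fintype.card (Fin k → F) : ℝ) * momentTerm d k x = 0 := calc
    _ = ∑ a : Fin k → F, ∑ f : Fin k → restrictTotalDegree σ F d,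
          ∏ j, centredZeroIndicator (f + fun i => a i • h) (x j) := by
        rw [← card_univ, ← nsmul_eq_mul, ← sum_const]
        exact sum_congr rfl fun a _ => hshift a
    _ = ∑ f : Fin k → restrictTotalDegree σ F d,
          (∑ a : Fin k → F, centredZeroIndicator (f + fun i => a i • h) (x j₀)) *
            ∏ j ∈ univ.erase j₀, centredZeroIndicator f (x j) := by
        rw [sum_comm]
        refine sum_congr rfl fun f _ => ?_
        rw [sum_mul]
        refine sum_congr rfl fun a _ => ?_
        rw [← mul_prod_erase _ _ (mem_univ j₀)]
        exact congrArg _ (prod_congr rfl fun j hj =>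
          centredZeroIndicator_add_smul_of_eval_eq_zero (hoff j hj) f a)
    _ = 0 := by simp [sum_centredZeroIndicator_add_smul hz]
  exact (mul_eq_zero.1 hmul).resolve_left (by positivity)

theorem sum_centredZeroIndicator [DecidableEq σ] (f : Fin k → restrictTotalDegree σ F d) :
    ∑ x, centredZeroIndicator f x =
      (#{x | ∀ i, eval x (f i : MvPolynomial σ F) = 0} : ℝ) -
        (Fintype.card F : ℝ) ^ Fintype.card σ * (Fintype.card F : ℝ)⁻¹ ^ k := by
  simp [centredZeroIndicator, zeroIndicator, sum_sub_distrib, sum_boole]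

theorem sum_pow_sum_centredZeroIndicator [DecidableEq σ] (t : ℕ) :
    ∑ f : Fin k → restrictTotalDegree σ F d, (∑ x, centredZeroIndicator f x) ^ t =
      ∑ x : Fin t → σ → F, momentTerm d k x := by
  simp only [momentTerm, ← Fin.prod_const, prod_univ_sum, Fintype.piFinset_univ]
  exact sum_comm

end Moments

section Shapes

variable {α : Type*} [DecidableEq α] {t : ℕ}

def shape (x : Fin t → α) (j : Fin t) : Fin t :=
  ({i | x i = x j} : Finset (Fin t)).min' ⟨j, by simp⟩

theorem apply_shape (x : Fin t → α) (j : Fin t) : x (shape x j) = x j :=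
  (mem_filter.1 (min'_mem ({i | x i = x j} : Finset (Fin t)) ⟨j, by simp⟩)).2

theorem shape_eq_shape_iff {x : Fin t → α} {i j : Fin t} : shape x i = shape x j ↔ x i = x j := by
  refine ⟨fun h => by rw [← apply_shape x i, h, apply_shape x j], fun h => ?_⟩
  simp only [shape, h]

theorem shape_shape (x : Fin t → α) (j : Fin t) : shape x (shape x j) = shape x j :=
  shape_eq_shape_iff.2 (apply_shape x j)

theorem eq_of_shape_eq {x y : Fin t → α} {c : Fin t → Fin t} (hx : shape x = c) (hy : shape y = c)
    (h : ∀ j, c j = j → x j = y j) : x = y := by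
  funext j
  rw [← apply_shape x j, ← apply_shape y j, hx, hy]
  exact h (c j) (by rw [← hx, shape_shape])

theorem card_image_add_card_le {x : Fin t → α} {U : Finset α} (hU : U ⊆ univ.image x)
    (hmult : ∀ z ∈ U, 2 ≤ #{j | x j = z}) : #(univ.image x) + #U ≤ t := by
  calc #(univ.image x) + #U
      = ∑ z ∈ univ.image x, (1 + if z ∈ U then 1 else 0) := by
        rw [sum_add_distrib, sum_boole, filter_mem_eq_inter,
          inter_eq_right.2 hU]
        simp
    _ ≤ ∑ z ∈ univ.image x, #{j | x j = z} := by
        refine sum_le_sum fun z hz => ?_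
        split_ifs with hzU
        · exact hmult z hzU
        · obtain ⟨j, -, rfl⟩ := mem_image.1 hz
          exact card_pos.2 ⟨j, by simp⟩
    _ = t := by
        rw [← card_eq_sum_card_image, card_univ, Fintype.card_fin]

end Shapes

section Counting

variable {t : ℕ}

theorem injOn_of_shape_eq {α : Type*} [DecidableEq α] {x : Fin t → α} {c : Fin t → Fin t}
    (hx : shape x = c) : Set.InjOn x {j | c j = j} := by
  intro i (hi : c i = i) j (hj : c j = j) h
  rw [← hi, ← hj, ← hx]
  exact shape_eq_shape_iff.2 h

theorem card_filter_image_of_shape_eq {α : Type*} [DecidableEq α] {x : Fin t → α}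
    {c : Fin t → Fin t} (hx : shape x = c) (p : α → Prop) [DecidablePred p] :
    #{z ∈ univ.image x | p z} = #{j | c j = j ∧ p (x j)} := by
  have himage : {z ∈ univ.image x | p z} = ({j | c j = j ∧ p (x j)} : Finset _).image x := by
    ext z
    simp only [mem_filter, mem_image, mem_univ, true_and]
    constructor
    · rintro ⟨⟨j, rfl⟩, hp⟩
      refine ⟨c j, ⟨?_, ?_⟩, ?_⟩ <;> rw [← hx]
      · exact shape_shape x j
      · rwa [apply_shape x j]
      · exact apply_shape x j
    · rintro ⟨j, ⟨-, hp⟩, rfl⟩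
      exact ⟨⟨j, rfl⟩, hp⟩
  rw [himage, card_image_of_injOn ((injOn_of_shape_eq hx).mono fun j hj =>
    (mem_filter.1 hj).2.1)]

theorem card_le_pow_of_eqOn {α : Type*} [Fintype α] {X : Finset (Fin t → α)} (R : Finset (Fin t))
    (hX : ∀ x ∈ X, ∀ y ∈ X, (∀ j ∈ R, x j = y j) → x = y) : #X ≤ Fintype.card α ^ #R := by
  calc #X ≤ #(univ : Finset (R → α)) :=
        card_le_card_of_injOn (fun x (j : R) => x j) (fun _ _ => mem_coe.2
          (mem_univ _)) fun x hx y hy h => hX x hx y hy fun j hj => congrFun h ⟨j, hj⟩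
    _ = Fintype.card α ^ #R := by simp

/-- A point on the line through `x j₁` and `x j₂` is encoded by one scalar. -/
theorem card_le_pow_of_eqOn_of_mem_line {V : Type*} [AddCommGroup V] [Module F V] [Fintype V]
    [Fintype F] {X : Finset (Fin t → V)} {Ron Roff : Finset (Fin t)} {j₁ j₂ : Fin t}
    (hj₁ : j₁ ∈ Ron) (hj₂ : j₂ ∈ Ron) (hj : j₁ ≠ j₂)
    (hX : ∀ x ∈ X, ∀ y ∈ X, (∀ j ∈ Ron ∪ Roff, x j = y j) → x = y)
    (hline : ∀ x ∈ X, ∀ j ∈ Ron, x j ∈ line[F, x j₁, x j₂]) :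
    #X ≤ Fintype.card V ^ 2 * Fintype.card F ^ (#Ron - 2) * Fintype.card V ^ #Roff := by
  set Ron' := (Ron.erase j₁).erase j₂
  have hcard : #Ron' = #Ron - 2 := by
    rw [card_erase_of_mem (mem_erase.2 ⟨hj.symm, hj₂⟩), card_erase_of_mem hj₁]
    rfl
  let code : (Fin t → V) → V × V × (Ron' → F) × (Roff → V) := fun x =>
    (x j₁, x j₂, fun j => Classical.epsilon fun r : F => AffineMap.lineMap (x j₁) (x j₂) r = x j,
      fun j => x j)
  have hcode : ∀ x ∈ X, ∀ j ∈ Ron', AffineMap.lineMap (x j₁) (x j₂)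
      (Classical.epsilon fun r : F => AffineMap.lineMap (x j₁) (x j₂) r = x j) = x j :=
    fun x hx j hj => Classical.epsilon_spec (mem_affineSpan_pair_iff_exists_lineMap_eq.1
      (hline x hx j (mem_of_mem_erase (mem_of_mem_erase hj))))
  calc #X ≤ #(univ : Finset (V × V × (Ron' → F) × (Roff → V))) := by
        refine card_le_card_of_injOn code (fun _ _ => mem_coe.2 (mem_univ _))
          fun x hx y hy h => hX x hx y hy fun j hj => ?_
        simp only [code, Prod.mk.injEq] at h
        obtain ⟨h₁, h₂, hpar, hoff⟩ := h
        rcases mem_union.1 hj with hj | hj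
        · by_cases hj₁' : j = j₁
          · rw [hj₁', h₁]
          by_cases hj₂' : j = j₂
          · rw [hj₂', h₂]
          have hj' : j ∈ Ron' := mem_erase.2 ⟨hj₂', mem_erase.2 ⟨hj₁', hj⟩⟩
          have hpar' := congrFun hpar ⟨j, hj'⟩
          rw [← hcode x hx j hj', ← hcode y hy j hj']
          rw [hpar', h₁, h₂]
        · exact congrFun hoff ⟨j, hj⟩
    _ = Fintype.card V ^ 2 * Fintype.card F ^ (#Ron - 2) * Fintype.card V ^ #Roff := by
        simp [hcard, sq, mul_assoc]

end Counting

section MomentBound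

variable {σ : Type*} [Fintype σ] [Fintype F] {d k t : ℕ}

variable (F d) in
noncomputable def onHeavyLine (x : Fin t → σ → F) : Finset (Fin t) :=
  {j | x j ∈ heavyLine F d (univ.image x)}

theorem exists_heavyLine_eq_of_momentTerm_ne_zero (ht : t ≤ 2 * d + 1) {x : Fin t → σ → F}
    (hx : momentTerm d k x ≠ 0) {j₀ : Fin t} (hj₀ : ∀ j, x j = x j₀ → j = j₀) :
    ∃ a, heavyLine F d (univ.image x) = line[F, x j₀, a] ∧
      d + 2 ≤ #{z ∈ univ.image x | z ∈ line[F, x j₀, a]} := by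
  set S := univ.image x
  have hj₀S : x j₀ ∈ S := mem_image_of_mem x (mem_univ j₀)
  have hS : #S ≤ t := card_image_le.trans (by simp)
  obtain ⟨a, -, ha⟩ : ∃ a ∈ S.erase (x j₀),
      d + 1 ≤ #{y ∈ S.erase (x j₀) | y ∈ line[F, x j₀, a]} := by
    by_contra! h
    refine hx (momentTerm_eq_zero hj₀ (separated_of_forall_card_filter_mem_line_le
      (notMem_erase _ _) ?_ fun a ha => Nat.le_of_lt_succ (h a ha)))
    rw [card_erase_of_mem hj₀S]
    omega
  have hlt : #{y ∈ S.erase (x j₀) | y ∈ line[F, x j₀, a]} <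
      #{z ∈ S | z ∈ line[F, x j₀, a]} :=
    card_lt_card ((ssubset_iff_of_subset
      (filter_subset_filter _ (erase_subset _ _))).2
      ⟨x j₀, mem_filter.2 ⟨hj₀S, left_mem_affineSpan_pair F (x j₀) a⟩,
        fun h => notMem_erase _ _ (mem_filter.1 h).1⟩)
  exact ⟨a, heavyLine_eq (by omega) (by omega), by omega⟩

/-- A value taken only once lies on the heavy line, so the values off it are taken twice. -/
theorem card_filter_mem_heavyLine_add_two_mul_le (ht : t ≤ 2 * d + 1) {x : Fin t → σ → F}
    (hx : momentTerm d k x ≠ 0) :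
    #{z ∈ univ.image x | z ∈ heavyLine F d (univ.image x)} +
      2 * #{z ∈ univ.image x | z ∉ heavyLine F d (univ.image x)} ≤ t := by
  set S := univ.image x
  have hmult : ∀ z ∈ {z ∈ S | z ∉ heavyLine F d S}, 2 ≤ #{j | x j = z} := by
    intro z hz
    obtain ⟨hzS, hz⟩ := mem_filter.1 hz
    obtain ⟨j₀, -, rfl⟩ := mem_image.1 hzS
    by_contra! h
    refine hz ?_
    have hj₀ : ∀ j, x j = x j₀ → j = j₀ := fun j hj =>
      (card_le_one (s := {j | x j = x j₀})).1 (by omega) j (by simp [hj]) j₀ (by simp)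
    obtain ⟨a, ha, -⟩ := exists_heavyLine_eq_of_momentTerm_ne_zero ht hx hj₀
    rw [ha]
    exact left_mem_affineSpan_pair F (x j₀) a
  have h₁ : #S + #{z ∈ S | z ∉ heavyLine F d S} ≤ t :=
    card_image_add_card_le (filter_subset _ _) hmult
  have h₂ := card_filter_add_card_filter_not (s := S) (· ∈ heavyLine F d S)
  omega

theorem pow_mul_two_mul_inv_pow_le {q : ℝ} (hq : 1 ≤ q) {e s D : ℕ} (he : e ≤ k * s + D)
    (hs : s ≤ t) : q ^ e * (2 * q⁻¹ ^ k) ^ s ≤ 2 ^ t * q ^ D := by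
  have hq0 : 0 < q := by linarith
  calc q ^ e * (2 * q⁻¹ ^ k) ^ s ≤ q ^ (k * s + D) * (2 * q⁻¹ ^ k) ^ s :=
        mul_le_mul_of_nonneg_right (pow_le_pow_right₀ hq he) (by positivity)
    _ = 2 ^ s * q ^ D := by
        rw [pow_add, mul_pow, ← pow_mul, inv_pow]
        field_simp
    _ ≤ 2 ^ t * q ^ D :=
        mul_le_mul_of_nonneg_right (pow_le_pow_right₀ (by norm_num) hs) (by positivity)

theorem sum_abs_momentTerm_le_of_card_le {X : Finset (Fin t → σ → F)} {e s D : ℕ}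
    (hX : #X ≤ Fintype.card F ^ e)
    (hterm : ∀ x ∈ X, |momentTerm d k x| ≤
      Fintype.card (Fin k → restrictTotalDegree σ F d) * (2 * (Fintype.card F : ℝ)⁻¹ ^ k) ^ s)
    (he : e ≤ k * s + D) (hs : s ≤ t) :
    ∑ x ∈ X, |momentTerm d k x| ≤
      2 ^ t * (Fintype.card F : ℝ) ^ D * Fintype.card (Fin k → restrictTotalDegree σ F d) := by
  have hq : (1 : ℝ) ≤ Fintype.card F := by exact_mod_cast Fintype.card_pos
  calc ∑ x ∈ X, |momentTerm d k x|
      ≤ #X * (Fintype.card (Fin k → restrictTotalDegree σ F d) *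
          (2 * (Fintype.card F : ℝ)⁻¹ ^ k) ^ s) := by
        simpa using sum_le_card_nsmul X _ _ hterm
    _ ≤ (Fintype.card F : ℝ) ^ e * (Fintype.card (Fin k → restrictTotalDegree σ F d) *
          (2 * (Fintype.card F : ℝ)⁻¹ ^ k) ^ s) :=
        mul_le_mul_of_nonneg_right (by exact_mod_cast hX) (by positivity)
    _ = (Fintype.card F : ℝ) ^ e * (2 * (Fintype.card F : ℝ)⁻¹ ^ k) ^ s *
          Fintype.card (Fin k → restrictTotalDegree σ F d) := by ring
    _ ≤ _ := mul_le_mul_of_nonneg_right (pow_mul_two_mul_inv_pow_le hq he hs) (by positivity)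

theorem sum_abs_momentTerm_le_of_no_singleton [DecidableEq σ] (hσ : Fintype.card σ ≤ k + 1)
    (ht : t ≤ 2 * d - 2) {c : Fin t → Fin t} (hc : ∀ j, ∃ i ≠ j, c i = c j) :
    ∑ x ∈ {x : Fin t → σ → F | shape x = c}, |momentTerm d k x| ≤
      2 ^ t * (Fintype.card F : ℝ) ^ (d - 1) *
        Fintype.card (Fin k → restrictTotalDegree σ F d) := by
  set X := ({x : Fin t → σ → F | shape x = c} : Finset _)
  set R : Finset (Fin t) := {j | c j = j}
  have hcard : ∀ x ∈ X, #(univ.image x) = #R := fun x hx => by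
    simpa using card_filter_image_of_shape_eq (mem_filter.1 hx).2 fun _ => True
  rcases X.eq_empty_or_nonempty with hX | ⟨x₀, hx₀⟩
  · rw [hX, sum_empty]
    positivity
  have hmult : ∀ z ∈ univ.image x₀, 2 ≤ #{j | x₀ j = z} := by
    intro z hz
    obtain ⟨j, -, rfl⟩ := mem_image.1 hz
    obtain ⟨i, hij, hi⟩ := hc j
    rw [← (mem_filter.1 hx₀).2, shape_eq_shape_iff] at hi
    exact one_lt_card.2 ⟨i, by simp [hi], j, by simp, hij⟩
  have hR : 2 * #R ≤ t := by
    have := card_image_add_card_le subset_rfl hmult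
    rw [hcard x₀ hx₀] at this
    omega
  refine sum_abs_momentTerm_le_of_card_le (e := Fintype.card σ * #R) (s := #R) ?_
    (fun x hx => ?_) ?_ (by omega)
  · calc #X ≤ Fintype.card (σ → F) ^ #R := card_le_pow_of_eqOn R fun x hx y hy h =>
          eq_of_shape_eq (mem_filter.1 hx).2 (mem_filter.1 hy).2
            fun j hj => h j (by simp [R, hj])
      _ = _ := by rw [Fintype.card_fun, ← pow_mul]
  · have := abs_momentTerm_le (d := d) (k := k) x subset_rfl
      (evalOn_surjective_of_card_le (by rw [hcard x hx]; omega))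
    rwa [hcard x hx] at this
  · have := Nat.mul_le_mul_right #R hσ
    rw [add_mul, one_mul] at this
    omega

theorem abs_momentTerm_le_of_mem_affineSubspace {x : Fin t → σ → F}
    {s : AffineSubspace F (σ → F)} {p : σ → F} (hp : p ∈ s) {O S : Finset (Fin t)}
    (hinj : Set.InjOn x ↑(O ∪ S)) (hO : #O ≤ d) (hOs : ∀ j ∈ O, x j ∉ s) (hS : #S = d + 1)
    (hSs : ∀ j ∈ S, x j ∈ s) :
    |momentTerm d k x| ≤ Fintype.card (Fin k → restrictTotalDegree σ F d) *
      (2 * (Fintype.card F : ℝ)⁻¹ ^ k) ^ (#O + (d + 1)) := by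
  have hcardO : #(O.image x) = #O := card_image_of_injOn (hinj.mono (by simp))
  have hcardS : #(S.image x) = d + 1 := by rw [card_image_of_injOn (hinj.mono (by simp)), hS]
  have hdisj : Disjoint (O.image x) (S.image x) := by
    simp only [disjoint_left, mem_image]
    rintro _ ⟨i, hi, rfl⟩ ⟨j, hj, hij⟩
    exact hOs i hi (hij ▸ hSs j hj)
  have hsurj : Function.Surjective (evalOn d (O.image x ∪ S.image x)) := by
    refine evalOn_union_surjective hp (hcardO.trans_le hO) ?_ hcardS.le ?_ <;>
      simp only [mem_image] <;> rintro _ ⟨j, hj, rfl⟩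
    exacts [hOs j hj, hSs j hj]
  have := abs_momentTerm_le (k := k) x (union_subset (image_subset_image (subset_univ _))
    (image_subset_image (subset_univ _))) hsurj
  rwa [card_union_of_disjoint hdisj, hcardS, hcardO] at this

theorem card_filter_mem_heavyLine_of_shape_eq (ht : t ≤ 2 * d + 1) {x : Fin t → σ → F}
    {c : Fin t → Fin t} (hx : shape x = c) (hterm : momentTerm d k x ≠ 0) {j₀ : Fin t}
    (hj₀ : ∀ j, c j = c j₀ → j = j₀) :
    d + 2 ≤ #{j | c j = j ∧ j ∈ onHeavyLine F d x} ∧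
      #{j | c j = j ∧ j ∈ onHeavyLine F d x} + 2 * #{j | c j = j ∧ j ∉ onHeavyLine F d x} ≤ t := by
  have hon := card_filter_image_of_shape_eq hx (· ∈ heavyLine F d (univ.image x))
  have hoff := card_filter_image_of_shape_eq hx (· ∉ heavyLine F d (univ.image x))
  simp only [onHeavyLine, mem_filter, mem_univ, true_and]
  rw [← hon, ← hoff]
  obtain ⟨a, ha, hcount⟩ := exists_heavyLine_eq_of_momentTerm_ne_zero ht hterm fun j h =>
    hj₀ j (by rw [← hx]; exact shape_eq_shape_iff.2 h)
  exact ⟨ha ▸ hcount, card_filter_mem_heavyLine_add_two_mul_le ht hterm⟩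

theorem sum_abs_momentTerm_le_of_singleton [DecidableEq σ] (hk : 1 ≤ k)
    (hσ : Fintype.card σ ≤ k + 1) (ht : t ≤ 2 * d - 2) {c : Fin t → Fin t} (J : Finset (Fin t))
    {j₀ : Fin t} (hj₀ : ∀ j, c j = c j₀ → j = j₀) :
    ∑ x ∈ {x : Fin t → σ → F | shape x = c ∧ onHeavyLine F d x = J}, |momentTerm d k x| ≤
      2 ^ t * (Fintype.card F : ℝ) ^ (d - 1) *
        Fintype.card (Fin k → restrictTotalDegree σ F d) := by
  rw [← sum_filter_ne_zero]
  set X := {x ∈ ({x : Fin t → σ → F | shape x = c ∧ onHeavyLine F d x = J} : Finset _) |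
    |momentTerm d k x| ≠ 0}
  have hX : ∀ x ∈ X, shape x = c ∧ onHeavyLine F d x = J ∧ momentTerm d k x ≠ 0 := by
    intro x hx
    simp only [X, mem_filter, mem_univ, true_and, ne_eq, abs_eq_zero] at hx
    exact ⟨hx.1.1, hx.1.2, hx.2⟩
  rcases X.eq_empty_or_nonempty with hXe | ⟨x₀, hx₀⟩
  · rw [hXe, sum_empty]
    positivity
  set Ron : Finset (Fin t) := {j | c j = j ∧ j ∈ J}
  set Roff : Finset (Fin t) := {j | c j = j ∧ j ∉ J}
  obtain ⟨hRon, hRoff⟩ : d + 2 ≤ #Ron ∧ #Ron + 2 * #Roff ≤ t := by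
    obtain ⟨hx₀c, hx₀J, hx₀⟩ := hX x₀ hx₀
    have := card_filter_mem_heavyLine_of_shape_eq (by omega) hx₀c hx₀ hj₀
    rwa [hx₀J] at this
  have hline : ∀ x ∈ X, ∃ a, heavyLine F d (univ.image x) = line[F, x j₀, a] :=
    fun x hx => (exists_heavyLine_eq_of_momentTerm_ne_zero (by omega) (hX x hx).2.2
      fun j h => hj₀ j (by rw [← (hX x hx).1]; exact shape_eq_shape_iff.2 h)).imp fun _ h => h.1
  have hmemJ : ∀ x ∈ X, ∀ j, j ∈ J ↔ x j ∈ heavyLine F d (univ.image x) := by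
    intro x hx j
    simp [← (hX x hx).2.1, onHeavyLine]
  have hinj : ∀ x ∈ X, Set.InjOn x ↑(Ron ∪ Roff) := fun x hx =>
    (injOn_of_shape_eq (hX x hx).1).mono fun j hj => by
      simp only [Ron, Roff, coe_union, coe_filter, Set.mem_union] at hj
      exact hj.elim (·.2.1) (·.2.1)
  obtain ⟨S₁, hS₁, hS₁card⟩ := exists_subset_card_eq (show d + 1 ≤ #Ron by omega)
  obtain ⟨j₁, hj₁, j₂, hj₂, hj₁₂⟩ := one_lt_card.1 (show 1 < #Ron by omega)
  refine sum_abs_momentTerm_le_of_card_le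
    (e := 2 * Fintype.card σ + (#Ron - 2) + Fintype.card σ * #Roff) (s := #Roff + (d + 1))
    ?_ (fun x hx => ?_) ?_ (by omega)
  · calc #X ≤ Fintype.card (σ → F) ^ 2 * Fintype.card F ^ (#Ron - 2) *
          Fintype.card (σ → F) ^ #Roff := by
          refine card_le_pow_of_eqOn_of_mem_line hj₁ hj₂ hj₁₂ (fun x hx y hy h =>
            eq_of_shape_eq (hX x hx).1 (hX y hy).1 fun j hj => h j ?_) fun x hx j hj => ?_
          · by_cases hjJ : j ∈ J <;> simp [Ron, Roff, hj, hjJ]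
          · obtain ⟨a, ha⟩ := hline x hx
            have hmem : ∀ i ∈ Ron, x i ∈ line[F, x j₀, a] := fun i hi =>
              ha ▸ (hmemJ x hx i).1 (mem_filter.1 hi).2.2
            rw [affineSpan_pair_eq_of_mem_of_mem_of_ne (hmem j₁ hj₁) (hmem j₂ hj₂)
              fun h => hj₁₂ (hinj x hx (by simp [hj₁]) (by simp [hj₂]) h)]
            exact hmem j hj
      _ = _ := by rw [Fintype.card_fun, ← pow_mul, ← pow_mul, ← pow_add, ← pow_add, mul_comm _ 2]
  · obtain ⟨a, ha⟩ := hline x hx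
    refine abs_momentTerm_le_of_mem_affineSubspace (ha ▸ left_mem_affineSpan_pair F _ _)
      ((hinj x hx).mono (coe_subset.2 (union_subset subset_union_right
        (hS₁.trans subset_union_left)))) (by omega)
      (fun j hj => mt (hmemJ x hx j).2 (mem_filter.1 hj).2.2) hS₁card
      fun j hj => (hmemJ x hx j).1 (mem_filter.1 (hS₁ hj)).2.2
  · have h₁ := Nat.mul_le_mul_right #Roff hσ
    have hd : 1 ≤ d := by omega
    have h₂ : k + d ≤ k * d + 1 := by nlinarith
    have h₃ : k * (#Roff + (d + 1)) = k * #Roff + k * d + k := by ring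
    rw [h₃]
    rw [add_mul, one_mul] at h₁
    generalize Fintype.card σ * #Roff = A at *
    generalize k * #Roff = B at *
    generalize k * d = C at *
    omega

theorem sum_abs_momentTerm_le [DecidableEq σ] (hk : 1 ≤ k) (hσ : Fintype.card σ ≤ k + 1)
    (ht : t ≤ 2 * d - 2) :
    ∑ x : Fin t → σ → F, |momentTerm d k x| ≤
      Fintype.card ((Fin t → Fin t) × Finset (Fin t)) * (2 ^ t * (Fintype.card F : ℝ) ^ (d - 1) *
        Fintype.card (Fin k → restrictTotalDegree σ F d)) := by
  rw [← sum_fiberwise univ (fun x => (shape x, onHeavyLine F d x)),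
    ← nsmul_eq_mul, ← card_univ, ← sum_const]
  refine sum_le_sum fun ⟨c, J⟩ _ => ?_
  simp only [Prod.mk.injEq]
  by_cases hc : ∃ j₀, ∀ j, c j = c j₀ → j = j₀
  · obtain ⟨j₀, hj₀⟩ := hc
    exact sum_abs_momentTerm_le_of_singleton hk hσ ht J hj₀
  · push Not at hc
    refine le_trans (sum_le_sum_of_subset_of_nonneg (fun x hx => ?_) fun _ _ _ =>
      abs_nonneg _) (sum_abs_momentTerm_le_of_no_singleton (c := c) hσ ht fun j => ?_)
    · simp only [mem_filter, mem_univ, true_and] at hx ⊢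
      exact hx.1
    · obtain ⟨i, hi, hij⟩ := hc j
      exact ⟨i, hij, hi⟩

end MomentBound

section CommonZeros

variable [Fintype F] {d k : ℕ}

theorem card_filter_lt_half_mul_pow_le (hk : 1 ≤ k) :
    (#{f : Fin k → restrictTotalDegree (Fin (k + 1)) F d |
        (#{x | ∀ i, eval x (f i : MvPolynomial (Fin (k + 1)) F) = 0} : ℝ) <
          Fintype.card F / 2} : ℝ) * ((Fintype.card F : ℝ) / 2) ^ (2 * d - 2) ≤
      Fintype.card ((Fin (2 * d - 2) → Fin (2 * d - 2)) × Finset (Fin (2 * d - 2))) *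
        (2 ^ (2 * d - 2) * (Fintype.card F : ℝ) ^ (d - 1) *
          Fintype.card (Fin k → restrictTotalDegree (Fin (k + 1)) F d)) := by
  have heven : Even (2 * d - 2) := ⟨d - 1, by omega⟩
  have hq : (Fintype.card F : ℝ) ≠ 0 := by exact_mod_cast Fintype.card_ne_zero
  have hsum : ∀ f : Fin k → restrictTotalDegree (Fin (k + 1)) F d, ∑ x, centredZeroIndicator f x =
      (#{x | ∀ i, eval x (f i : MvPolynomial (Fin (k + 1)) F) = 0} : ℝ) - Fintype.card F := by
    intro f
    rw [sum_centredZeroIndicator, Fintype.card_fin, pow_succ, mul_comm, ← mul_assoc, ← mul_pow,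
      inv_mul_cancel₀ hq, one_pow, one_mul]
  have hmarkov : ∀ a : ℝ, a < Fintype.card F / 2 →
      ((Fintype.card F : ℝ) / 2) ^ (2 * d - 2) ≤ (a - Fintype.card F) ^ (2 * d - 2) := by
    intro a ha
    rw [← heven.pow_abs (a - Fintype.card F)]
    refine pow_le_pow_left₀ (by positivity) ?_ _
    rw [abs_sub_comm]
    exact (le_abs_self _).trans' (by linarith)
  calc _ = ∑ f ∈ {f : Fin k → restrictTotalDegree (Fin (k + 1)) F d |
        (#{x | ∀ i, eval x (f i : MvPolynomial (Fin (k + 1)) F) = 0} : ℝ) <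
          Fintype.card F / 2}, ((Fintype.card F : ℝ) / 2) ^ (2 * d - 2) := by
        rw [sum_const, nsmul_eq_mul]
    _ ≤ ∑ f : Fin k → restrictTotalDegree (Fin (k + 1)) F d,
          (∑ x, centredZeroIndicator f x) ^ (2 * d - 2) := by
        refine sum_le_sum_of_subset_of_nonneg (filter_subset _ _)
          (fun f _ _ => heven.pow_nonneg _) |>.trans' (sum_le_sum fun f hf => ?_)
        rw [hsum]
        exact hmarkov _ (mem_filter.1 hf).2
    _ ≤ _ := by
        rw [sum_pow_sum_centredZeroIndicator]
        exact (sum_le_sum fun x _ => le_abs_self _).trans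
          (sum_abs_momentTerm_le hk (by simp) le_rfl)

theorem card_filter_lt_half_le (hk : 1 ≤ k) (hd : 1 ≤ d) :
    (#{f : Fin k → restrictTotalDegree (Fin (k + 1)) F d |
        (#{x | ∀ i, eval x (f i : MvPolynomial (Fin (k + 1)) F) = 0} : ℝ) <
          Fintype.card F / 2} : ℝ) ≤
      Fintype.card ((Fin (2 * d - 2) → Fin (2 * d - 2)) × Finset (Fin (2 * d - 2))) *
        4 ^ (2 * d - 2) * (Fintype.card F : ℝ) ^ ((1 : ℤ) - d) *
          Fintype.card (Fin k → restrictTotalDegree (Fin (k + 1)) F d) := by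
  have hq : (0 : ℝ) < Fintype.card F := by exact_mod_cast Fintype.card_pos
  have hzpow : (Fintype.card F : ℝ) ^ ((1 : ℤ) - d) = ((Fintype.card F : ℝ) ^ (d - 1))⁻¹ := by
    rw [show (1 : ℤ) - d = -((d - 1 : ℕ) : ℤ) by omega, zpow_neg, zpow_natCast]
  rw [hzpow]
  have key := card_filter_lt_half_mul_pow_le (F := F) (d := d) hk
  rw [← le_div_iff₀ (by positivity)] at key
  refine key.trans (le_of_eq ?_)
  have h4 : (4 : ℝ) ^ (2 * d - 2) = 2 ^ (2 * d - 2) * 2 ^ (2 * d - 2) := by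
    rw [← mul_pow]; norm_num
  have hqt : (Fintype.card F : ℝ) ^ (2 * d - 2) =
      (Fintype.card F : ℝ) ^ (d - 1) * (Fintype.card F : ℝ) ^ (d - 1) := by
    rw [← pow_add]; congr 1; omega
  rw [div_pow, h4, hqt]
  field_simp

end CommonZeros

section Subtypes

variable {σ ι : Type*} {d : ℕ}

def restrictTotalDegreePiEquiv :
    {f : ι → MvPolynomial σ F // ∀ i, (f i).totalDegree ≤ d} ≃ (ι → restrictTotalDegree σ F d) :=
  Equiv.subtypePiEquivPi.trans (Equiv.piCongrRight fun _ =>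
    Equiv.subtypeEquivRight fun g => (mem_restrictTotalDegree σ d g).symm)

theorem natCard_subtype_forall_totalDegree_le_and (P : (ι → MvPolynomial σ F) → Prop) :
    Nat.card {f : ι → MvPolynomial σ F // (∀ i, (f i).totalDegree ≤ d) ∧ P f} =
      Nat.card {g : ι → restrictTotalDegree σ F d // P fun i => g i} :=
  Nat.card_congr ((Equiv.subtypeSubtypeEquivSubtypeInter _ P).symm.trans
    (restrictTotalDegreePiEquiv.subtypeEquiv fun _ => Iff.rfl))

end Subtypes

end RandomPolynomialSystem

open RandomPolynomialSystem

/-- Fix `k` and set `d = (k+1)² + 1`. There is a constant `C > 0`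
(depending only on `k`) such that for every finite field `F` of order
`q = Fintype.card F > d(d−1)/2`: if `f₁, …, f_k` are chosen independently and uniformly at
random among polynomials in `k+1` variables of total degree at most `d`, and `Z` is the
number of common zeros in `F^(k+1)`, then `ℙ[Z < q/2] ≤ C·q^(1−d)`. Probabilities are
expressed as counts: the number of tuples realizing the event is at most `C·q^(1−d)` times
the total number of tuples. -/
theorem statement_7 (k : ℕ) (hk : 0 < k) (d : ℕ) (hd : d = (k + 1) ^ 2 + 1) :
    ∃ C : ℝ, 0 < C ∧
      ∀ (F : Type) [Field F] [Fintype F],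
        d * (d - 1) / 2 < Fintype.card F →
        (Nat.card {f : Fin k → MvPolynomial (Fin (k + 1)) F //
            (∀ i, (f i).totalDegree ≤ d) ∧
            (Nat.card {x : Fin (k + 1) → F //
                ∀ i, MvPolynomial.eval x (f i) = 0} : ℝ) <
              (Fintype.card F : ℝ) / 2} : ℝ) ≤
          C * (Fintype.card F : ℝ) ^ ((1 : ℤ) - (d : ℤ)) *
            Nat.card {f : Fin k → MvPolynomial (Fin (k + 1)) F //
              ∀ i, (f i).totalDegree ≤ d} := by
  have hN : 0 < Fintype.card ((Fin (2 * d - 2) → Fin (2 * d - 2)) × Finset (Fin (2 * d - 2))) :=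
    @Fintype.card_pos _ _ ⟨(id, ∅)⟩
  refine ⟨Fintype.card ((Fin (2 * d - 2) → Fin (2 * d - 2)) × Finset (Fin (2 * d - 2))) *
    4 ^ (2 * d - 2), by positivity, fun F _ _ _ => ?_⟩
  rw [natCard_subtype_forall_totalDegree_le_and, Nat.card_congr restrictTotalDegreePiEquiv,
    Nat.card_eq_fintype_card, Nat.card_eq_fintype_card, Fintype.card_subtype]
  simp only [Nat.card_eq_fintype_card, Fintype.card_subtype]
  exact card_filter_lt_half_le hk (by omega)
end

section
/- Let U be a finite universe, and let C_1, …, C_k be collections of subsets of U satisfying: (a) for every tuple (S_1, …, S_k) ∈ C_1 × ⋯ × C_k, |S_1 ∩ ⋯ ∩ S_k| ≤ s; and (b) for every choice of pairs (ℓ_1, T_1), …, (ℓ_k, T_k) with T_j ∈ C_{ℓ_j}, the pairs pairwise distinct, and ℓ_i = ℓ_j for some i ≠ j, one has |T_1 ∩ ⋯ ∩ T_k| ≤ z. Let H be a bipartite graph with left vertex set A the disjoint union of A_1, …, A_k and right vertex set B, such that every tuple (a_1, …, a_k) ∈ A_1 × ⋯ × A_k has at most t common neighbours in B, and every k-element subset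 X ⊆ A with X ∩ A_i = ∅ for some i has at most w common neighbours in B. Let π_r : C_r → A_r be injections for r = 1, …, k, and for S ∈ C_r define ζ_r(S) = {(u,b) ∈ U × B : u ∈ S and π_r(S) is adjacent to b in H}. Then for every choice of pairwise distinct pairs (r_1, S_1), …, (r_k, S_k) with S_j ∈ C_{r_j}, one has |ζ_{r_1}(S_1) ∩ ⋯ ∩ ζ_{r_k}(S_k)| ≤ max(s·t, z·w). -/
/-!
The intersection of the sets `ζ_{r_j}(S_j)` is the product of `⋂ S_j` with the common
neighbourhood of the vertices `π_{r_j}(S_j)`. If the colours `r_j` are distinct they form a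
permutation of the parts, so both factors come from full transversal tuples and are bounded by
`s` and `t`. Otherwise some colour repeats, so hypothesis (b) bounds the first factor by `z`,
while the `k` distinct vertices `π_{r_j}(S_j)` miss some part and their common neighbourhood
has at most `w` elements.
-/

open Function Set

theorem Set.iInter_setOf_fst_mem_and {ι α β : Type*} (s : ι → Set α) (p : ι → β → Prop) :
    ⋂ i, {x : α × β | x.1 ∈ s i ∧ p i x.2} = (⋂ i, s i) ×ˢ {b | ∀ i, p i b} := by
  ext; simp [forall_and]

theorem Sigma.exists_eq_mk_of_fst_eq {κ : Type*} {A : κ → Type*} (g : κ → Σ i, A i)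
    (h : ∀ i, (g i).1 = i) : ∃ a : ∀ i, A i, g = fun i => ⟨i, a i⟩ :=
  ⟨fun i => h i ▸ (g i).2, funext fun i => Sigma.ext (h i) (eqRec_heq _ _).symm⟩

theorem Sigma.exists_forall_iff_of_bijective_fst {ι κ : Type*} {A : κ → Type*}
    (P : ι → Σ i, A i) (h : Bijective fun j => (P j).1) :
    ∃ a : ∀ i, A i, ∀ q : (Σ i, A i) → Prop, (∀ j, q (P j)) ↔ ∀ i, q ⟨i, a i⟩ := by
  let e := Equiv.ofBijective _ h
  obtain ⟨a, ha⟩ := Sigma.exists_eq_mk_of_fst_eq (P ∘ e.symm) e.apply_symm_apply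
  refine ⟨a, fun q => e.symm.surjective.forall.trans ?_⟩
  simp only [← comp_apply (f := P), ha]

theorem statement_12_general (U : Type) (k : ℕ)
    (s z t w : ℕ)
    (𝒞 : Fin k → Set (Set U))
    (hs : ∀ S : (r : Fin k) → Set U, (∀ r, S r ∈ 𝒞 r) → (⋂ r, S r).ncard ≤ s)
    (hz : ∀ (ℓ : Fin k → Fin k) (T : Fin k → Set U),
      (∀ j, T j ∈ 𝒞 (ℓ j)) →
      Function.Injective (fun j => (ℓ j, T j)) →
      ¬ Function.Injective ℓ →
      (⋂ j, T j).ncard ≤ z)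
    (A : Fin k → Type) (B : Type)
    (E : (Σ i, A i) → B → Prop)
    (ht : ∀ a : (i : Fin k) → A i, Nat.card {b : B // ∀ i, E ⟨i, a i⟩ b} ≤ t)
    (hw : ∀ X : Finset (Σ i, A i), X.card = k → (∃ i, ∀ x ∈ X, x.1 ≠ i) →
      Nat.card {b : B // ∀ x ∈ X, E x b} ≤ w)
    (π : (r : Fin k) → (𝒞 r) → A r) (hπ : ∀ r, Function.Injective (π r))
    (rs : Fin k → Fin k) (S : (j : Fin k) → (𝒞 (rs j)))
    (hdist : Function.Injective (fun j => (rs j, (S j : Set U)))) :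
    (⋂ j, {p : U × B |
        p.1 ∈ (S j : Set U) ∧ E ⟨rs j, π (rs j) (S j)⟩ p.2}).ncard ≤
      max (s * t) (z * w) := by
  set P : Fin k → Σ r, 𝒞 r := fun j => ⟨rs j, S j⟩
  have hP : Injective P := hdist.of_comp (f := fun p : Σ r, 𝒞 r => (p.1, (p.2 : Set U)))
  rw [Set.iInter_setOf_fst_mem_and, Set.ncard_prod]
  by_cases hrs : Injective rs
  · obtain ⟨T, hT⟩ :=
      Sigma.exists_forall_iff_of_bijective_fst P (Finite.injective_iff_bijective.mp hrs)
    have hU : ⋂ j, (S j : Set U) = ⋂ r, (T r : Set U) := by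
      ext u; simpa only [mem_iInter] using hT fun p => u ∈ (p.2 : Set U)
    have hB : {b | ∀ j, E ⟨rs j, π (rs j) (S j)⟩ b} = {b | ∀ r, E ⟨r, π r (T r)⟩ b} := by
      ext b; exact hT fun p => E ⟨p.1, π p.1 p.2⟩ b
    rw [hU, hB]
    exact (Nat.mul_le_mul (hs _ fun r => (T r).2) (ht _)).trans (le_max_left _ _)
  · have hf : Injective fun j => (⟨rs j, π (rs j) (S j)⟩ : Σ i, A i) :=
      (injective_id.sigma_map hπ).comp hP
    set X := Finset.univ.map ⟨_, hf⟩
    have hX : X.card = k := by simp [X]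
    have hX_misses : ∃ i, ∀ x ∈ X, x.1 ≠ i := by
      obtain ⟨i, hi⟩ := not_forall.mp (mt Finite.injective_iff_surjective.mpr hrs)
      exact ⟨i, by simpa [X] using hi⟩
    have hB : {b | ∀ j, E ⟨rs j, π (rs j) (S j)⟩ b} = {b | ∀ x ∈ X, E x b} := by
      ext; simp [X]
    rw [hB]
    exact (Nat.mul_le_mul (hz rs _ (fun j => (S j).2) hdist hrs) (hw X hX hX_misses)).trans
      (le_max_right _ _)

/-- soundness of panchromatic graph composition. Let `U` be a finite
universe and `𝒞_1, …, 𝒞_k` collections of subsets of `U` with: (a) every tuple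
`(S_1,…,S_k) ∈ 𝒞_1 × ⋯ × 𝒞_k` has `|S_1 ∩ ⋯ ∩ S_k| ≤ s`; (b) every family of pairwise
distinct pairs `(ℓ_1,T_1), …, (ℓ_k,T_k)` with `T_j ∈ 𝒞_{ℓ_j}` and `ℓ_i = ℓ_j` for some
`i ≠ j` has `|T_1 ∩ ⋯ ∩ T_k| ≤ z`. Let `H` be a bipartite graph with left vertex set the
disjoint union of `A_1, …, A_k` and right vertex set `B`, such that every tuple in
`A_1 × ⋯ × A_k` has at most `t` common neighbours, and every `k`-element subset of the left
side missing some part `A_i` has at most `w` common neighbours. Let `π_r : 𝒞_r → A_r` be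
injections and `ζ_r(S) = {(u,b) : u ∈ S and π_r(S) adjacent to b}`. Then for all pairwise
distinct pairs `(r_1,S_1), …, (r_k,S_k)` with `S_j ∈ 𝒞_{r_j}`,
`|ζ_{r_1}(S_1) ∩ ⋯ ∩ ζ_{r_k}(S_k)| ≤ max (s·t) (z·w)`. -/
theorem statement_12 (U : Type) [Fintype U] (k : ℕ) (hk : 0 < k)
    (s z t w : ℕ)
    (𝒞 : Fin k → Set (Set U))
    (hs : ∀ S : (r : Fin k) → Set U, (∀ r, S r ∈ 𝒞 r) → (⋂ r, S r).ncard ≤ s)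
    (hz : ∀ (ℓ : Fin k → Fin k) (T : Fin k → Set U),
      (∀ j, T j ∈ 𝒞 (ℓ j)) →
      Function.Injective (fun j => (ℓ j, T j)) →
      ¬ Function.Injective ℓ →
      (⋂ j, T j).ncard ≤ z)
    (A : Fin k → Type) [∀ i, Fintype (A i)] (B : Type) [Fintype B]
    (E : (Σ i, A i) → B → Prop)
    (ht : ∀ a : (i : Fin k) → A i, Nat.card {b : B // ∀ i, E ⟨i, a i⟩ b} ≤ t)
    (hw : ∀ X : Finset (Σ i, A i), X.card = k → (∃ i, ∀ x ∈ X, x.1 ≠ i) →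
      Nat.card {b : B // ∀ x ∈ X, E x b} ≤ w)
    (π : (r : Fin k) → (𝒞 r) → A r) (hπ : ∀ r, Function.Injective (π r))
    (rs : Fin k → Fin k) (S : (j : Fin k) → (𝒞 (rs j)))
    (hdist : Function.Injective (fun j => (rs j, (S j : Set U)))) :
    (⋂ j, {p : U × B |
        p.1 ∈ (S j : Set U) ∧ E ⟨rs j, π (rs j) (S j)⟩ p.2}).ncard ≤
      max (s * t) (z * w) :=
  statement_12_general U k s z t w 𝒞 hs hz A B E ht hw π hπ rs S hdist
end
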